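/- Assume k_{-w₀(α)}=k_α for all α∈Π. For every finite-dimensional H-module X and every finite-dimensional H_M-module (σ′,U′), there is a ℂ-linear isomorphism Hom_{H_M}(X|_{H_M}, U′) ≅ Hom_H(X, X(δ(M), aσ′)) between the spaces of module homomorphisms (second form of Frobenius reciprocity). -/

import Mathlib

/- Formalization of the setting of Barbasch–Ciubotaru, "Hermitian forms for
affine Hecke algebras": a reduced root system, Weyl group, parameters,
complexifications, and the graded affine Hecke algebra. -/

noncomputable section

structure GHA where
  (V Vd VC VdC W H : Type)
  [addV : AddCommGroup V] [modV : Module ℝ V] [fdV : FiniteDimensional ℝ V]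
  [addVd : AddCommGroup Vd] [modVd : Module ℝ Vd] [fdVd : FiniteDimensional ℝ Vd]
  [deqV : DecidableEq V] [deqW : DecidableEq W]
  [addVC : AddCommGroup VC] [modVC : Module ℂ VC]
  [addVdC : AddCommGroup VdC] [modVdC : Module ℂ VdC]
  [grpW : Group W] [finW : Fintype W]
  [ringH : Ring H] [algH : Algebra ℂ H]
  -- the perfect bilinear pairing between V and V∨
  pairR : V →ₗ[ℝ] Vd →ₗ[ℝ] ℝ
  pair_nondeg_left : ∀ v : V, (∀ u : Vd, pairR v u = 0) → v = 0
  pair_nondeg_right : ∀ u : Vd, (∀ v : V, pairR v u = 0) → u = 0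
  -- roots, coroots, and the bijection α ↦ α∨
  roots : Finset V
  corootsF : Finset Vd
  cv : V → Vd
  roots_ne_zero : ∀ α ∈ roots, α ≠ 0
  coroots_ne_zero : ∀ β ∈ corootsF, β ≠ 0
  cv_mem : ∀ α ∈ roots, cv α ∈ corootsF
  cv_injOn : Set.InjOn cv roots
  cv_surjOn : ∀ β ∈ corootsF, ∃ α ∈ roots, cv α = β
  pair_cv_self : ∀ α ∈ roots, pairR α (cv α) = 2
  reflV_mem : ∀ α ∈ roots, ∀ β ∈ roots, β - pairR β (cv α) • α ∈ roots
  reflVd_mem : ∀ α ∈ roots, ∀ β ∈ corootsF, β - pairR α β • cv α ∈ corootsF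
  reduced : ∀ α ∈ roots, (2 : ℝ) • α ∉ roots
  -- simple roots and positive roots
  simples : Finset V
  posRoots : Finset V
  simples_subset : simples ⊆ posRoots
  posRoots_subset : posRoots ⊆ roots
  roots_pos_or_neg : ∀ α ∈ roots, α ∈ posRoots ∨ -α ∈ posRoots
  posRoots_not_neg : ∀ α ∈ posRoots, -α ∉ posRoots
  simples_linearIndependent : LinearIndependent ℝ (fun β : {x // x ∈ simples} => (β : V))
  posRoots_nonneg_comb : ∀ α ∈ posRoots, ∃ c : V → ℝ,
    (∀ β ∈ simples, 0 ≤ c β) ∧ α = ∑ β ∈ simples, c β • β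
  -- the Weyl group, acting on V and V∨, generated by the reflections s_α
  s : V → W
  actV : W →* V ≃ₗ[ℝ] V
  actVd : W →* Vd ≃ₗ[ℝ] Vd
  actV_s : ∀ α ∈ roots, ∀ v : V, actV (s α) v = v - pairR v (cv α) • α
  actVd_s : ∀ α ∈ roots, ∀ u : Vd, actVd (s α) u = u - pairR α u • cv α
  act_pair : ∀ (w : W) (v : V) (u : Vd), pairR (actV w v) (actVd w u) = pairR v u
  actV_faithful : ∀ w : W, (∀ v : V, actV w v = v) → w = 1
  gen_by_refl : Subgroup.closure (s '' roots) = (⊤ : Subgroup W)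
  actV_roots : ∀ (w : W), ∀ α ∈ roots, actV w α ∈ roots
  -- the longest element
  w0 : W
  w0_neg : ∀ α ∈ posRoots, -(actV w0 α) ∈ posRoots
  w0_unique : ∀ w : W, (∀ α ∈ posRoots, -(actV w α) ∈ posRoots) → w = w0
  -- the parameter function k (extended W-invariantly to all roots)
  kpar : V → ℝ
  kpar_invariant : ∀ (w : W), ∀ α ∈ roots, kpar (actV w α) = kpar α
  -- complexifications of V and V∨, with real and imaginary parts
  iV : V →+ VC
  iVd : Vd →+ VdC
  iV_smul : ∀ (r : ℝ) (v : V), iV (r • v) = (r : ℂ) • iV v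
  iVd_smul : ∀ (r : ℝ) (u : Vd), iVd (r • u) = (r : ℂ) • iVd u
  reV : VC →+ V
  imV : VC →+ V
  reVd : VdC →+ Vd
  imVd : VdC →+ Vd
  reV_iV : ∀ v : V, reV (iV v) = v
  imV_iV : ∀ v : V, imV (iV v) = 0
  reVd_iVd : ∀ u : Vd, reVd (iVd u) = u
  imVd_iVd : ∀ u : Vd, imVd (iVd u) = 0
  vc_decomp : ∀ x : VC, x = iV (reV x) + Complex.I • iV (imV x)
  vdc_decomp : ∀ y : VdC, y = iVd (reVd y) + Complex.I • iVd (imVd y)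
  reV_real_smul : ∀ (r : ℝ) (x : VC), reV ((r : ℂ) • x) = r • reV x
  imV_real_smul : ∀ (r : ℝ) (x : VC), imV ((r : ℂ) • x) = r • imV x
  reVd_real_smul : ∀ (r : ℝ) (y : VdC), reVd ((r : ℂ) • y) = r • reVd y
  imVd_real_smul : ∀ (r : ℝ) (y : VdC), imVd ((r : ℂ) • y) = r • imVd y
  -- the complex bilinear extension of the pairing
  pairC : VC → VdC → ℂ
  pairC_add_left : ∀ x x' y, pairC (x + x') y = pairC x y + pairC x' y
  pairC_add_right : ∀ x y y', pairC x (y + y') = pairC x y + pairC x y'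
  pairC_smul_left : ∀ (c : ℂ) x y, pairC (c • x) y = c * pairC x y
  pairC_smul_right : ∀ (c : ℂ) x y, pairC x (c • y) = c * pairC x y
  pairC_compat : ∀ (v : V) (u : Vd), pairC (iV v) (iVd u) = (pairR v u : ℂ)
  -- the complexified Weyl group actions
  actVC : W →* VC ≃ₗ[ℂ] VC
  actVdC : W →* VdC ≃ₗ[ℂ] VdC
  actVC_iV : ∀ (w : W) (v : V), actVC w (iV v) = iV (actV w v)
  actVdC_iVd : ∀ (w : W) (u : Vd), actVdC w (iVd u) = iVd (actVd w u)
  -- the graded affine Hecke algebra H: elements t_w and the subalgebra S(V_ℂ)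
  t : W → H
  t_one : t 1 = 1
  t_mul : ∀ w w', t w * t w' = t (w * w')
  θ : VC → H
  θ_add : ∀ x y, θ (x + y) = θ x + θ y
  θ_smul : ∀ (c : ℂ) (x : VC), θ (c • x) = c • θ x
  θ_comm : ∀ x y, θ x * θ y = θ y * θ x
  -- the graded Hecke algebra cross relation
  cross_rel : ∀ α ∈ simples, ∀ ω : VC,
    θ ω * t (s α) = t (s α) * θ (actVC (s α) ω)
      + algebraMap ℂ H ((kpar α : ℂ) * pairC ω (iVd (cv α)))
  -- H ≅ ℂ[W] ⊗ S(V_ℂ) as a (ℂ[W], S(V_ℂ))-bimodule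
  pbw_span : ∀ h : H, ∃ c : W → Algebra.adjoin ℂ (Set.range θ),
    h = ∑ w : W, t w * (c w : H)
  pbw_indep : ∀ c : W → Algebra.adjoin ℂ (Set.range θ),
    ∑ w : W, t w * (c w : H) = 0 → ∀ w, c w = 0
  -- the subalgebra generated by θ(V_ℂ) is the symmetric algebra S(V_ℂ)
  poly_univ : ∀ (B : Type) [CommRing B] [Algebra ℂ B] (f : VC → B),
    (∀ x y, f (x + y) = f x + f y) → (∀ (c : ℂ) x, f (c • x) = c • f x) →
    ∃! g : Algebra.adjoin ℂ (Set.range θ) →ₐ[ℂ] B,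
      ∀ x : VC, g ⟨θ x, Algebra.subset_adjoin ⟨x, rfl⟩⟩ = f x

attribute [instance] GHA.addV GHA.modV GHA.fdV GHA.addVd GHA.modVd GHA.fdVd
  GHA.deqV GHA.deqW GHA.addVC GHA.modVC GHA.addVdC GHA.modVdC GHA.grpW GHA.finW
  GHA.ringH GHA.algH

namespace GHA

/-- Complex conjugation on V_ℂ. -/
def conjVC (D : GHA) (x : D.VC) : D.VC := D.iV (D.reV x) - Complex.I • D.iV (D.imV x)

/-- Complex conjugation on V∨_ℂ. -/
def conjVdC (D : GHA) (y : D.VdC) : D.VdC := D.iVd (D.reVd y) - Complex.I • D.iVd (D.imVd y)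

/-- The bullet operation: conjugate-linear anti-automorphism with t_w ↦ t_{w⁻¹},
ω ↦ conj ω. -/
structure IsBullet (D : GHA) (f : D.H → D.H) : Prop where
  map_add : ∀ x y, f (x + y) = f x + f y
  map_smul : ∀ (c : ℂ) (x : D.H), f (c • x) = (starRingEnd ℂ) c • f x
  map_mul : ∀ x y, f (x * y) = f y * f x
  map_one : f 1 = 1
  map_t : ∀ w : D.W, f (D.t w) = D.t w⁻¹
  map_theta : ∀ x : D.VC, f (D.θ x) = D.θ (D.conjVC x)

/-- The star operation: conjugate-linear anti-automorphism with t_w ↦ t_{w⁻¹},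
ω ↦ −t_{w₀}·conj(w₀(ω))·t_{w₀}. -/
structure IsStar (D : GHA) (f : D.H → D.H) : Prop where
  map_add : ∀ x y, f (x + y) = f x + f y
  map_smul : ∀ (c : ℂ) (x : D.H), f (c • x) = (starRingEnd ℂ) c • f x
  map_mul : ∀ x y, f (x * y) = f y * f x
  map_one : f 1 = 1
  map_t : ∀ w : D.W, f (D.t w) = D.t w⁻¹
  map_theta : ∀ x : D.VC,
    f (D.θ x) = -(D.t D.w0 * D.θ (D.conjVC (D.actVC D.w0 x)) * D.t D.w0)

/-- The automorphism δ: t_w ↦ t_{w₀ww₀}, ω ↦ −w₀(ω). -/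
structure IsDelta (D : GHA) (f : D.H → D.H) : Prop where
  map_add : ∀ x y, f (x + y) = f x + f y
  map_smul : ∀ (c : ℂ) (x : D.H), f (c • x) = c • f x
  map_mul : ∀ x y, f (x * y) = f x * f y
  map_one : f 1 = 1
  map_t : ∀ w : D.W, f (D.t w) = D.t (D.w0 * w * D.w0)
  map_theta : ∀ x : D.VC, f (D.θ x) = -(D.θ (D.actVC D.w0 x))

/-- The standing assumption k_{−w₀(α)} = k_α for α ∈ Π. -/
def KSymm (D : GHA) : Prop := ∀ α ∈ D.simples, D.kpar (-(D.actV D.w0 α)) = D.kpar α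

section Forms

variable {X : Type} [AddCommGroup X] [Module ℂ X]

/-- Sesquilinear form (conjugate-linear in the first variable). -/
def SesqForm (B : X → X → ℂ) : Prop :=
  (∀ x x' y, B (x + x') y = B x y + B x' y) ∧
  (∀ x y y', B x (y + y') = B x y + B x y') ∧
  (∀ (c : ℂ) (x y : X), B (c • x) y = (starRingEnd ℂ) c * B x y) ∧
  (∀ (c : ℂ) (x y : X), B x (c • y) = c * B x y)

/-- Hermitian form. -/
def HermForm (B : X → X → ℂ) : Prop := ∀ x y, B x y = (starRingEnd ℂ) (B y x)

/-- κ-invariance of a form: ⟨π(h)x, y⟩ = ⟨x, π(κ(h))y⟩. -/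
def InvForm (D : GHA) (π : D.H →ₐ[ℂ] Module.End ℂ X) (κ : D.H → D.H)
    (B : X → X → ℂ) : Prop :=
  ∀ (h : D.H) (x y : X), B (π h x) y = B x (π (κ h) y)

end Forms

/-- Irreducibility of a representation of a ℂ-algebra A on X. -/
def IsIrrRep (A : Type) [Ring A] [Algebra ℂ A] {X : Type} [AddCommGroup X]
    [Module ℂ X] (π : A →ₐ[ℂ] Module.End ℂ X) : Prop :=
  Nontrivial X ∧ ∀ U : Submodule ℂ X, (∀ (a : A), ∀ x ∈ U, π a x ∈ U) → U = ⊥ ∨ U = ⊤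

/-- Generalized weight space for a commuting family of operators indexed by V_ℂ. -/
def wtAux (D : GHA) {X : Type} [AddCommGroup X] [Module ℂ X]
    (T : D.VC → Module.End ℂ X) (lam : D.VdC) : Submodule ℂ X where
  carrier := {x | ∀ ω : D.VC, ∃ n : ℕ,
    ((T ω - D.pairC ω lam • (1 : Module.End ℂ X)) ^ n) x = 0}
  zero_mem' := fun ω => ⟨1, by simp⟩
  add_mem' := by
    intro a b ha hb
    intro ω
    obtain ⟨n, hn⟩ := ha ω
    obtain ⟨m, hm⟩ := hb ω
    refine ⟨n + m, ?_⟩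
    have hA : ((T ω - D.pairC ω lam • (1 : Module.End ℂ X)) ^ (n + m)) a = 0 := by
      rw [add_comm, pow_add, Module.End.mul_apply, hn, map_zero]
    have hB : ((T ω - D.pairC ω lam • (1 : Module.End ℂ X)) ^ (n + m)) b = 0 := by
      rw [pow_add, Module.End.mul_apply, hm, map_zero]
    rw [map_add, hA, hB, add_zero]
  smul_mem' := by
    intro c a ha ω
    obtain ⟨n, hn⟩ := ha ω
    exact ⟨n, by rw [map_smul, hn, smul_zero]⟩

/-- Generalized A-weight space X_λ of an H-module. -/
def wtH (D : GHA) {X : Type} [AddCommGroup X] [Module ℂ X]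
    (π : D.H →ₐ[ℂ] Module.End ℂ X) (lam : D.VdC) : Submodule ℂ X :=
  D.wtAux (fun ω => π (D.θ ω)) lam

/-- The set Ω(X) of A-weights of an H-module. -/
def OmegaH (D : GHA) {X : Type} [AddCommGroup X] [Module ℂ X]
    (π : D.H →ₐ[ℂ] Module.End ℂ X) : Set D.VdC :=
  {lam | D.wtH π lam ≠ ⊥}

/-- Casselman's criterion for temperedness. -/
def IsTempered (D : GHA) {X : Type} [AddCommGroup X] [Module ℂ X]
    (π : D.H →ₐ[ℂ] Module.End ℂ X) : Prop :=
  ∀ lam ∈ D.OmegaH π, ∀ ω : D.V,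
    (∀ α ∈ D.simples, 0 < D.pairR ω (D.cv α)) → D.pairR ω (D.reVd lam) ≤ 0

section Parabolic

variable (D : GHA) (PiM : Finset D.V)

/-- The parabolic subgroup W_M. -/
def WM : Subgroup D.W := Subgroup.closure (D.s '' (PiM : Set D.V))

/-- The positive roots R⁺_M lying in the span of Π_M. -/
def RplusM : Set D.V :=
  {α | α ∈ D.posRoots ∧ α ∈ Submodule.span ℝ (PiM : Set D.V)}

/-- x is the minimal length representative of x·W_M, i.e. x(R⁺_M) ⊆ R⁺. -/
def IsMinRep (x : D.W) : Prop := ∀ α ∈ D.RplusM PiM, D.actV x α ∈ D.posRoots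

/-- The set J_M of minimal length coset representatives. -/
abbrev JM : Type := {x : D.W // D.IsMinRep PiM x}

/-- The parabolic subalgebra H_M. -/
def HM : Subalgebra ℂ D.H :=
  Algebra.adjoin ℂ (Set.range D.θ ∪ (D.t '' ((D.WM PiM : Subgroup D.W) : Set D.W)))

/-- t_w as an element of H_M, for w ∈ W_M. -/
def tM (w : D.W) (hw : w ∈ D.WM PiM) : D.HM PiM :=
  ⟨D.t w, Algebra.subset_adjoin (Or.inr ⟨w, hw, rfl⟩)⟩

/-- θ(ω) as an element of H_M. -/
def θM (x : D.VC) : D.HM PiM :=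
  ⟨D.θ x, Algebra.subset_adjoin (Or.inl ⟨x, rfl⟩)⟩

/-- Π_{δ(M)} = −w₀(Π_M). -/
def deltaSimples : Finset D.V := PiM.image (fun α => -(D.actV D.w0 α))

/-- w is the longest element of W_M. -/
def IsLongest (w : D.W) : Prop :=
  w ∈ D.WM PiM ∧ ∀ α ∈ D.RplusM PiM, -(D.actV w α) ∈ D.RplusM PiM

end Parabolic

/-- The unique factorization z = c_M(z)·m_M(z) with c_M(z) minimal in z·W_M and
m_M(z) ∈ W_M. -/
structure CosetData (D : GHA) (PiM : Finset D.V) where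
  c : D.W → D.W
  m : D.W → D.W
  c_min : ∀ z, D.IsMinRep PiM (c z)
  m_mem : ∀ z, m z ∈ D.WM PiM
  factor : ∀ z, z = c z * m z
  uniq : ∀ (z c' m' : D.W), D.IsMinRep PiM c' → m' ∈ D.WM PiM → z = c' * m' →
    c' = c z ∧ m' = m z

/-- The defining formulas for the H-action on the parabolically induced module
X(M,σ) = H ⊗_{H_M} U, realized on ⊕_{x ∈ J_M} U. -/
def IsInducedAction (D : GHA) (PiM : Finset D.V) (cd : CosetData D PiM)
    {U : Type} [AddCommGroup U] [Module ℂ U]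
    (σ : D.HM PiM →ₐ[ℂ] Module.End ℂ U)
    (πI : D.H →ₐ[ℂ] Module.End ℂ (D.JM PiM → U)) : Prop :=
  (∀ (z : D.W) (x : D.JM PiM) (v : U),
      πI (D.t z) (Pi.single x v) =
        Pi.single (⟨cd.c (z * x.1), cd.c_min _⟩ : D.JM PiM)
          (σ (D.tM PiM (cd.m (z * x.1)) (cd.m_mem _)) v)) ∧
  (∀ (ω : D.VC) (x : D.JM PiM) (v : U),
      πI (D.θ ω) (Pi.single x v) =
        Pi.single x (σ (D.θM PiM (D.actVC x.1⁻¹ ω)) v) +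
          ∑ β ∈ D.posRoots.filter (fun β => -(D.actV x.1⁻¹ β) ∈ D.posRoots),
            ((D.kpar β : ℂ) * D.pairC ω (D.iVd (D.cv β))) •
              (Pi.single (⟨cd.c (D.s β * x.1), cd.c_min _⟩ : D.JM PiM)
                (σ (D.tM PiM (cd.m (D.s β * x.1)) (cd.m_mem _)) v) : D.JM PiM → U))

end GHA

open GHA in
/-- The space of H_M-module homomorphisms X|_{H_M} → U. -/
def HomHM (D : GHA) (PiM : Finset D.V) {X U : Type}
    [AddCommGroup X] [Module ℂ X] [AddCommGroup U] [Module ℂ U]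
    (π : D.H →ₐ[ℂ] Module.End ℂ X)
    (σ : D.HM PiM →ₐ[ℂ] Module.End ℂ U) : Submodule ℂ (X →ₗ[ℂ] U) where
  carrier := {f | ∀ (h : D.H) (hh : h ∈ D.HM PiM) (x : X),
    f (π h x) = σ ⟨h, hh⟩ (f x)}
  zero_mem' := by intro h hh x; simp
  add_mem' := by
    intro f g hf hg h hh x
    simp [hf h hh x, hg h hh x]
  smul_mem' := by
    intro c f hf h hh x
    simp [hf h hh x]

open GHA in
/-- The space of H-module homomorphisms X → Y. -/
def HomH (D : GHA) {X Y : Type}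
    [AddCommGroup X] [Module ℂ X] [AddCommGroup Y] [Module ℂ Y]
    (π : D.H →ₐ[ℂ] Module.End ℂ X)
    (ρ : D.H →ₐ[ℂ] Module.End ℂ Y) : Submodule ℂ (X →ₗ[ℂ] Y) where
  carrier := {F | ∀ (h : D.H) (x : X), F (π h x) = ρ h (F x)}
  zero_mem' := by intro h x; simp
  add_mem' := by
    intro F G hF hG h x
    simp [hF h x, hG h x]
  smul_mem' := by
    intro c F hF h x
    simp [hF h x]

/-!
Evaluation at `x₀ = w₀ w_{0,δ(M)}` turns an `H`-map `X → X(δ(M), aσ′)` into an `H_M`-map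
`X → U′`, and `f ↦ (x ↦ (j ↦ f (t_{x₀ j⁻¹} x)))` is its inverse.

Evaluation at `x₀` is `H_M`-linear for two reasons. Conjugation by `x₀` carries `W_{δ(M)}` onto
`W_M`, which handles the `t_w`. And the correction terms of `θ(ω)` never reach the coset
`x₀ W_{δ(M)}`: that coset sends every positive root outside the span of `Π_{δ(M)}` to a negative
root, while a reflection `s_β` shortening a minimal representative `x` would have to send
`-x⁻¹β`, such a root, to `β`.

The inverse map is `H`-linear because `H` is spanned by the `a · t_{x₀ j⁻¹}` with `a ∈ H_M`. This
follows from `H = H_M · t_W`, which the cross relation gives once `W` is known to be generated by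
simple reflections: if `w ≠ 1` then `w α < 0` for some simple `α`, and `w s_α` has a smaller
inversion set.
-/

namespace GHA

variable (D : GHA)

@[simp] lemma actV_mul_apply (g h : D.W) (v : D.V) :
    D.actV (g * h) v = D.actV g (D.actV h v) := by
  rw [map_mul, LinearEquiv.mul_apply]

@[simp] lemma actV_one_apply (v : D.V) : D.actV 1 v = v := by
  rw [map_one]; rfl

@[simp] lemma actV_apply_inv_apply (g : D.W) (v : D.V) : D.actV g (D.actV g⁻¹ v) = v := by
  rw [← actV_mul_apply, mul_inv_cancel, actV_one_apply]

@[simp] lemma actV_inv_apply_apply (g : D.W) (v : D.V) : D.actV g⁻¹ (D.actV g v) = v := by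
  rw [← actV_mul_apply, inv_mul_cancel, actV_one_apply]

@[simp] lemma actVC_mul_apply (g h : D.W) (ω : D.VC) :
    D.actVC (g * h) ω = D.actVC g (D.actVC h ω) := by
  rw [map_mul, LinearEquiv.mul_apply]

@[simp] lemma actVC_apply_inv_apply (g : D.W) (ω : D.VC) :
    D.actVC g (D.actVC g⁻¹ ω) = ω := by
  rw [← actVC_mul_apply, mul_inv_cancel, map_one]; rfl

lemma eq_of_forall_actV_eq {g h : D.W} (H : ∀ v, D.actV g v = D.actV h v) : g = h := by
  rw [← mul_inv_eq_one]
  exact D.actV_faithful _ fun v => by simp [H]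

lemma actV_s_eq_preReflection {γ : D.V} (hγ : γ ∈ D.roots) :
    ⇑(D.actV (D.s γ)) = Module.preReflection γ (D.pairR.flip (D.cv γ)) := by
  ext v
  simp [Module.preReflection_apply, D.actV_s γ hγ]

/-- Their quotient is a transvection of finite order, hence trivial. -/
lemma eq_of_actV_eq_preReflection {g h : D.W} {x : D.V} {f f' : Module.Dual ℝ D.V}
    (hf : f x = 2) (hf' : f' x = 2) (hg : ⇑(D.actV g) = Module.preReflection x f)
    (hh : ⇑(D.actV h) = Module.preReflection x f') : g = h := by
  let b := Module.finBasis ℝ D.V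
  let Φ : Set D.V := Set.range fun p : D.W × Fin (Module.finrank ℝ D.V) => D.actV p.1 (b p.2)
  have hΦ : Φ.Finite := Set.finite_range _
  have hΦspan : Submodule.span ℝ Φ = ⊤ := by
    refine eq_top_iff.mpr (b.span_eq.symm.le.trans (Submodule.span_mono ?_))
    rintro _ ⟨i, rfl⟩
    exact ⟨(1, i), by simp⟩
  have hmaps : ∀ k : D.W, Set.MapsTo (D.actV k) Φ Φ := by
    rintro k _ ⟨⟨u, i⟩, rfl⟩
    exact ⟨(k * u, i), by simp⟩
  have hff' : f = f' := Module.Dual.eq_of_preReflection_mapsTo hΦ hΦspan hf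
    (hg ▸ hmaps g) hf' (hh ▸ hmaps h)
  exact D.eq_of_forall_actV_eq fun v => by rw [hg, hh, hff']

lemma s_mul_self {γ : D.V} (hγ : γ ∈ D.roots) : D.s γ * D.s γ = 1 :=
  D.eq_of_forall_actV_eq fun v => by
    rw [actV_mul_apply, actV_s_eq_preReflection D hγ, actV_one_apply]
    exact Module.involutive_preReflection (f := D.pairR.flip (D.cv γ)) (D.pair_cv_self γ hγ) v

lemma s_inv {γ : D.V} (hγ : γ ∈ D.roots) : (D.s γ)⁻¹ = D.s γ :=
  inv_eq_of_mul_eq_one_left (D.s_mul_self hγ)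

lemma actV_s_self {γ : D.V} (hγ : γ ∈ D.roots) : D.actV (D.s γ) γ = -γ := by
  rw [D.actV_s γ hγ, D.pair_cv_self γ hγ]
  module

lemma neg_mem_roots {γ : D.V} (hγ : γ ∈ D.roots) : -γ ∈ D.roots := by
  simpa [D.actV_s_self hγ] using D.actV_roots (D.s γ) γ hγ

lemma s_neg {γ : D.V} (hγ : γ ∈ D.roots) : D.s (-γ) = D.s γ := by
  have hneg := D.pair_cv_self (-γ) (D.neg_mem_roots hγ)
  refine D.eq_of_actV_eq_preReflection (x := γ) (f := -D.pairR.flip (D.cv (-γ))) ?_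
    (D.pair_cv_self γ hγ) ?_ (D.actV_s_eq_preReflection hγ)
  · simpa using hneg
  · ext v
    simp [Module.preReflection_apply, D.actV_s _ (D.neg_mem_roots hγ)]

lemma conj_s {γ : D.V} (hγ : γ ∈ D.roots) (w : D.W) :
    w * D.s γ * w⁻¹ = D.s (D.actV w γ) := by
  have hwγ := D.actV_roots w γ hγ
  refine D.eq_of_actV_eq_preReflection (x := D.actV w γ)
    (f := (D.pairR.flip (D.cv γ)).comp (D.actV w⁻¹).toLinearMap) ?_
    (D.pair_cv_self _ hwγ) ?_ (D.actV_s_eq_preReflection hwγ)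
  · simpa using D.pair_cv_self γ hγ
  · ext v
    simp [Module.preReflection_apply, D.actV_s γ hγ]

lemma exists_dual_eq_on_simples (φ : D.V → ℝ) :
    ∃ ℓ : Module.Dual ℝ D.V, ∀ γ ∈ D.simples, ℓ γ = φ γ := by
  let hli := D.simples_linearIndependent
  obtain ⟨ℓ, hℓ⟩ := LinearMap.exists_extend
    ((Finsupp.linearCombination ℝ fun γ : {x // x ∈ D.simples} => φ γ) ∘ₗ hli.repr)
  refine ⟨ℓ, fun γ hγ => ?_⟩
  have hmem : γ ∈ Submodule.span ℝ (Set.range fun β : {x // x ∈ D.simples} => (β : D.V)) :=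
    Submodule.subset_span ⟨⟨γ, hγ⟩, rfl⟩
  have := LinearMap.congr_fun hℓ ⟨γ, hmem⟩
  simpa [hli.repr_eq_single ⟨γ, hγ⟩ ⟨γ, hmem⟩ rfl] using this

lemma mem_span_of_dual_eq_zero {ℓ : Module.Dual ℝ D.V} (hℓ : ∀ γ ∈ D.simples, 0 ≤ ℓ γ)
    {β : D.V} (hβ : β ∈ D.posRoots) (hβℓ : ℓ β = 0) :
    β ∈ Submodule.span ℝ (D.simples.filter (fun γ => ℓ γ = 0) : Set D.V) := by
  obtain ⟨c, hc, rfl⟩ := D.posRoots_nonneg_comb β hβ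
  simp only [map_sum, map_smul, smul_eq_mul] at hβℓ
  have hterm := (Finset.sum_eq_zero_iff_of_nonneg fun γ hγ =>
    mul_nonneg (hc γ hγ) (hℓ γ hγ)).mp hβℓ
  refine Submodule.sum_mem _ fun γ hγ => ?_
  by_cases hγℓ : ℓ γ = 0
  · exact Submodule.smul_mem _ _ (Submodule.subset_span (by simp [hγ, hγℓ]))
  · simp [(mul_eq_zero.mp (hterm γ hγ)).resolve_right hγℓ]

lemma dual_nonneg_of_mem_posRoots {ℓ : Module.Dual ℝ D.V} (hℓ : ∀ γ ∈ D.simples, 0 ≤ ℓ γ)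
    {β : D.V} (hβ : β ∈ D.posRoots) : 0 ≤ ℓ β := by
  obtain ⟨c, hc, rfl⟩ := D.posRoots_nonneg_comb β hβ
  simp only [map_sum, map_smul, smul_eq_mul]
  exact Finset.sum_nonneg fun γ hγ => mul_nonneg (hc γ hγ) (hℓ γ hγ)

lemma dual_pos_of_mem_posRoots {ℓ : Module.Dual ℝ D.V} (hℓ : ∀ γ ∈ D.simples, 0 < ℓ γ)
    {β : D.V} (hβ : β ∈ D.posRoots) : 0 < ℓ β := by
  refine (D.dual_nonneg_of_mem_posRoots (fun γ hγ => (hℓ γ hγ).le) hβ).lt_of_ne' fun h => ?_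
  have hempty : D.simples.filter (fun γ => ℓ γ = 0) = ∅ :=
    Finset.filter_false_of_mem fun γ hγ => (hℓ γ hγ).ne'
  have := D.mem_span_of_dual_eq_zero (fun γ hγ => (hℓ γ hγ).le) hβ h
  rw [hempty, Finset.coe_empty, Submodule.span_empty, Submodule.mem_bot] at this
  exact D.roots_ne_zero β (D.posRoots_subset hβ) this

lemma mem_posRoots_of_dual_pos {ℓ : Module.Dual ℝ D.V} (hℓ : ∀ γ ∈ D.simples, 0 ≤ ℓ γ)
    {β : D.V} (hβ : β ∈ D.roots) (hβℓ : 0 < ℓ β) : β ∈ D.posRoots := by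
  refine (D.roots_pos_or_neg β hβ).resolve_right fun hneg => ?_
  have := D.dual_nonneg_of_mem_posRoots hℓ hneg
  rw [map_neg] at this
  linarith

noncomputable def height : Module.Dual ℝ D.V :=
  (D.exists_dual_eq_on_simples fun _ => 1).choose

lemma height_simple {α : D.V} (hα : α ∈ D.simples) : D.height α = 1 :=
  (D.exists_dual_eq_on_simples fun _ => 1).choose_spec α hα

lemma mem_posRoots_iff_height_pos {β : D.V} (hβ : β ∈ D.roots) :
    β ∈ D.posRoots ↔ 0 < D.height β :=
  ⟨D.dual_pos_of_mem_posRoots fun γ hγ => by simp [D.height_simple hγ],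
    D.mem_posRoots_of_dual_pos (fun γ hγ => by simp [D.height_simple hγ]) hβ⟩

lemma not_mem_posRoots_of_neg_mem {β : D.V} (h : -β ∈ D.posRoots) : β ∉ D.posRoots :=
  fun hβ => D.posRoots_not_neg β hβ h

lemma neg_mem_posRoots_of_not_mem {β : D.V} (hβ : β ∈ D.roots) (h : β ∉ D.posRoots) :
    -β ∈ D.posRoots :=
  (D.roots_pos_or_neg β hβ).resolve_left h

lemma smul_mem_posRoots {β : D.V} (hβ : β ∈ D.posRoots) {t : ℝ} (ht : 0 < t)
    (htβ : t • β ∈ D.roots) : t • β ∈ D.posRoots := by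
  rw [D.mem_posRoots_iff_height_pos htβ, map_smul, smul_eq_mul]
  exact mul_pos ht ((D.mem_posRoots_iff_height_pos (D.posRoots_subset hβ)).mp hβ)

lemma exists_pos_smul_of_mem_span_simple {α β : D.V} (hα : α ∈ D.simples)
    (hβ : β ∈ D.posRoots) (hβα : β ∈ Submodule.span ℝ {α}) : ∃ t : ℝ, 0 < t ∧ β = t • α := by
  obtain ⟨t, rfl⟩ := Submodule.mem_span_singleton.mp hβα
  refine ⟨t, ?_, rfl⟩
  simpa [D.height_simple hα] using
    (D.mem_posRoots_iff_height_pos (D.posRoots_subset hβ)).mp hβ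

/-- `s_α` does not change the coefficients of the simple roots other than `α`. -/
lemma actV_s_mem_posRoots {α β : D.V} (hα : α ∈ D.simples) (hβ : β ∈ D.posRoots)
    (hβα : β ∉ Submodule.span ℝ {α}) : D.actV (D.s α) β ∈ D.posRoots := by
  classical
  obtain ⟨ℓ, hℓ⟩ := D.exists_dual_eq_on_simples fun γ => if γ = α then 0 else 1
  have hℓ0 : ∀ γ ∈ D.simples, 0 ≤ ℓ γ := fun γ hγ => by
    rw [hℓ γ hγ]; split_ifs <;> norm_num
  have hℓα : ℓ α = 0 := by simp [hℓ α hα]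
  have hsβ : ℓ (D.actV (D.s α) β) = ℓ β := by
    simp [D.actV_s α (D.posRoots_subset (D.simples_subset hα)), hℓα]
  have hfilter : D.simples.filter (fun γ => ℓ γ = 0) = {α} := by
    ext γ
    simp only [Finset.mem_filter, Finset.mem_singleton]
    constructor
    · rintro ⟨hγ, hγ0⟩
      by_contra hne
      simp [hℓ γ hγ, hne] at hγ0
    · rintro rfl
      exact ⟨hα, hℓα⟩
  refine D.mem_posRoots_of_dual_pos hℓ0
    (D.actV_roots _ β (D.posRoots_subset hβ)) (hsβ ▸ ?_)
  refine (D.dual_nonneg_of_mem_posRoots hℓ0 hβ).lt_of_ne' fun h => hβα ?_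
  simpa [hfilter] using D.mem_span_of_dual_eq_zero hℓ0 hβ h

lemma w0_inv : D.w0⁻¹ = D.w0 := by
  refine D.w0_unique _ fun α hα => ?_
  have hr := D.actV_roots D.w0⁻¹ α (D.posRoots_subset hα)
  refine D.neg_mem_posRoots_of_not_mem hr fun hpos => ?_
  have := D.w0_neg _ hpos
  rw [actV_apply_inv_apply] at this
  exact D.posRoots_not_neg α hα this

@[simp] lemma actV_w0_actV_w0 (v : D.V) : D.actV D.w0 (D.actV D.w0 v) = v := by
  simpa [D.w0_inv] using D.actV_inv_apply_apply D.w0 v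

lemma actV_w0_not_mem_posRoots {β : D.V} (hβ : β ∈ D.posRoots) :
    D.actV D.w0 β ∉ D.posRoots :=
  D.not_mem_posRoots_of_neg_mem (D.w0_neg β hβ)

lemma actV_w0_mem_posRoots {β : D.V} (hβ : β ∈ D.roots) (h : β ∉ D.posRoots) :
    D.actV D.w0 β ∈ D.posRoots := by
  simpa using D.w0_neg _ (D.neg_mem_posRoots_of_not_mem hβ h)

/-- If `w` kept every simple root positive, it would keep every positive root positive, and
`w w₀` would satisfy the characterisation of `w₀`. -/
lemma exists_simple_not_mem_posRoots {w : D.W} (hw : w ≠ 1) :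
    ∃ α ∈ D.simples, D.actV w α ∉ D.posRoots := by
  by_contra! h
  have hpos : ∀ β ∈ D.posRoots, D.actV w β ∈ D.posRoots := fun β hβ =>
    (D.mem_posRoots_iff_height_pos (D.actV_roots w β (D.posRoots_subset hβ))).mpr
      (D.dual_pos_of_mem_posRoots (ℓ := D.height ∘ₗ (D.actV w).toLinearMap)
        (fun γ hγ => (D.mem_posRoots_iff_height_pos
          (D.actV_roots w γ (D.posRoots_subset (D.simples_subset hγ)))).mp (h γ hγ)) hβ)
  have hw0 : w * D.w0 = D.w0 := D.w0_unique _ fun β hβ => by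
    simpa using hpos _ (D.w0_neg β hβ)
  exact hw (by simpa using hw0)

noncomputable def inversionSet (w : D.W) : Finset D.V :=
  D.posRoots.filter fun γ => D.actV w γ ∉ D.posRoots

lemma image_inversionSet_mul_s_subset {α : D.V} (hα : α ∈ D.simples) {w : D.W}
    (hwα : D.actV w α ∉ D.posRoots) :
    (D.inversionSet (w * D.s α)).image (D.actV (D.s α)) ⊆ (D.inversionSet w).erase α := by
  have hαr := D.posRoots_subset (D.simples_subset hα)
  intro δ hδ
  obtain ⟨γ, hγ, rfl⟩ := Finset.mem_image.mp hδ
  simp only [inversionSet, Finset.mem_filter, actV_mul_apply] at hγ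
  obtain ⟨hγpos, hγinv⟩ := hγ
  have hγα : γ ∉ Submodule.span ℝ {α} := by
    intro hspan
    obtain ⟨t, ht, rfl⟩ := D.exists_pos_smul_of_mem_span_simple hα hγpos hspan
    have key : D.actV w (D.actV (D.s α) (t • α)) = t • -D.actV w α := by
      simp [D.actV_s_self hαr]
    refine hγinv (key ▸ D.smul_mem_posRoots (D.neg_mem_posRoots_of_not_mem
      (D.actV_roots w α hαr) hwα) ht ?_)
    exact key ▸ D.actV_roots _ _ (D.actV_roots _ _ (D.posRoots_subset hγpos))
  refine Finset.mem_erase.mpr ⟨fun hsγ => ?_, ?_⟩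
  · refine D.posRoots_not_neg γ hγpos ?_
    have : γ = D.actV (D.s α) α := calc
      γ = D.actV (D.s α) (D.actV (D.s α) γ) := by
        rw [← actV_mul_apply, D.s_mul_self hαr, actV_one_apply]
      _ = D.actV (D.s α) α := by rw [hsγ]
    rw [this, D.actV_s_self hαr, neg_neg]
    exact D.simples_subset hα
  · exact Finset.mem_filter.mpr ⟨D.actV_s_mem_posRoots hα hγpos hγα, hγinv⟩

lemma card_inversionSet_mul_s_lt {α : D.V} (hα : α ∈ D.simples) {w : D.W}
    (hwα : D.actV w α ∉ D.posRoots) :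
    (D.inversionSet (w * D.s α)).card < (D.inversionSet w).card :=
  calc (D.inversionSet (w * D.s α)).card
      = ((D.inversionSet (w * D.s α)).image (D.actV (D.s α))).card :=
        (Finset.card_image_of_injective _ (D.actV (D.s α)).injective).symm
    _ ≤ ((D.inversionSet w).erase α).card :=
        Finset.card_le_card (D.image_inversionSet_mul_s_subset hα hwα)
    _ < (D.inversionSet w).card :=
        Finset.card_erase_lt_of_mem (Finset.mem_filter.mpr ⟨D.simples_subset hα, hwα⟩)

lemma closure_s_simples : Subgroup.closure (D.s '' D.simples) = ⊤ := by
  suffices ∀ n, ∀ w : D.W, (D.inversionSet w).card = n →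
      w ∈ Subgroup.closure (D.s '' D.simples) from eq_top_iff.mpr fun w _ => this _ w rfl
  intro n
  induction n using Nat.strong_induction_on with
  | _ n ih =>
    intro w hcard
    by_cases hw : w = 1
    · exact hw ▸ Subgroup.one_mem _
    obtain ⟨α, hα, hwα⟩ := D.exists_simple_not_mem_posRoots hw
    have hmem := ih _ (hcard ▸ D.card_inversionSet_mul_s_lt hα hwα) (w * D.s α) rfl
    have hw' : w = w * D.s α * D.s α := by
      rw [mul_assoc, D.s_mul_self (D.posRoots_subset (D.simples_subset hα)), mul_one]
    rw [hw']
    exact Subgroup.mul_mem _ hmem (Subgroup.subset_closure ⟨α, hα, rfl⟩)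

lemma map_conj_WM (w : D.W) {P : Finset D.V} (hP : P ⊆ D.roots) :
    (D.WM P).map (MulAut.conj w).toMonoidHom = D.WM (P.image (D.actV w)) := by
  rw [WM, MonoidHom.map_closure, WM, Finset.coe_image, Set.image_image, Set.image_image]
  congr 1
  exact Set.image_congr fun γ hγ => by simpa using D.conj_s (hP hγ) w

lemma WM_image_neg {P : Finset D.V} (hP : P ⊆ D.roots) :
    D.WM (P.image Neg.neg) = D.WM P := by
  rw [WM, WM, Finset.coe_image, Set.image_image]
  congr 1
  exact Set.image_congr fun γ hγ => D.s_neg (hP hγ)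

lemma WM_deltaSimples {P : Finset D.V} (hP : P ⊆ D.simples) :
    D.WM (D.deltaSimples P) = (D.WM P).map (MulAut.conj D.w0).toMonoidHom := by
  have hPr : P ⊆ D.roots := fun γ hγ =>
    D.posRoots_subset (D.simples_subset (hP hγ))
  have himage : P.image (D.actV D.w0) ⊆ D.roots := by
    intro δ hδ
    obtain ⟨γ, hγ, rfl⟩ := Finset.mem_image.mp hδ
    exact D.actV_roots _ _ (hPr hγ)
  rw [D.map_conj_WM _ hPr, ← D.WM_image_neg himage, deltaSimples, Finset.image_image]
  rfl

lemma conj_mem_WM_iff {PiM : Finset D.V} (hPiM : PiM ⊆ D.simples) {w0dM : D.W}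
    (hw0dM : w0dM ∈ D.WM (D.deltaSimples PiM)) {m : D.W} :
    (D.w0 * w0dM) * m * (D.w0 * w0dM)⁻¹ ∈ D.WM PiM ↔ m ∈ D.WM (D.deltaSimples PiM) := by
  have hconj : m ∈ D.WM (D.deltaSimples PiM) ↔
      w0dM * m * w0dM⁻¹ ∈ D.WM (D.deltaSimples PiM) := by
    rw [Subgroup.mul_mem_cancel_right _ (inv_mem hw0dM),
      Subgroup.mul_mem_cancel_left _ hw0dM]
  rw [hconj, D.WM_deltaSimples hPiM, Subgroup.mem_map_equiv, MulAut.conj_symm_apply,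
    mul_inv_rev, D.w0_inv]
  simp only [mul_assoc]

def setStabilizer (S : Set D.V) : Subgroup D.W where
  carrier := {g | ∀ v, D.actV g v ∈ S ↔ v ∈ S}
  one_mem' := by simp
  mul_mem' := fun hg hh v => by rw [actV_mul_apply, hg, hh]
  inv_mem' := fun hg v => by rw [← hg, actV_apply_inv_apply]

lemma s_mem_setStabilizer {γ : D.V} (hγ : γ ∈ D.roots) {S : Set D.V}
    (hS : ∀ v ∈ S, D.actV (D.s γ) v ∈ S) : D.s γ ∈ D.setStabilizer S := fun v =>
  ⟨fun hv => by simpa [← actV_mul_apply, D.s_mul_self hγ] using hS _ hv, hS v⟩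

def posRootsOutside (P : Finset D.V) : Set D.V :=
  {γ | γ ∈ D.posRoots ∧ γ ∉ Submodule.span ℝ (P : Set D.V)}

/-- The reflection in `ν = -w₀(α)` is `w₀ s_α w₀`, and `s_α` permutes the positive roots that are
not multiples of `α`. -/
lemma actV_s_mem_posRootsOutside {PiM : Finset D.V} (hPiM : PiM ⊆ D.simples) {ν : D.V}
    (hν : ν ∈ D.deltaSimples PiM) {γ : D.V} (hγ : γ ∈ D.posRootsOutside (D.deltaSimples PiM)) :
    D.actV (D.s ν) γ ∈ D.posRootsOutside (D.deltaSimples PiM) := by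
  obtain ⟨hγpos, hγN⟩ := hγ
  obtain ⟨α, hαM, rfl⟩ := Finset.mem_image.mp hν
  have hα := hPiM hαM
  have hαr := D.posRoots_subset (D.simples_subset hα)
  have hνN : -D.actV D.w0 α ∈ Submodule.span ℝ (D.deltaSimples PiM : Set D.V) :=
    Submodule.subset_span hν
  have hsν : D.s (-D.actV D.w0 α) = D.w0 * D.s α * D.w0 := by
    rw [D.s_neg (D.actV_roots _ _ hαr), ← D.conj_s hαr, D.w0_inv]
  have hγ' : -D.actV D.w0 γ ∉ Submodule.span ℝ {α} := by
    intro hspan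
    obtain ⟨t, ht⟩ := Submodule.mem_span_singleton.mp hspan
    refine hγN ?_
    have : γ = t • -D.actV D.w0 α := by
      rw [smul_neg, ← map_smul, ht, map_neg, neg_neg, actV_w0_actV_w0]
    exact this ▸ Submodule.smul_mem _ t hνN
  refine ⟨?_, fun hspan => hγN ?_⟩
  · have := D.w0_neg _ (D.actV_s_mem_posRoots hα (D.w0_neg γ hγpos) hγ')
    simpa [hsν] using this
  · rw [D.actV_s _ (D.posRoots_subset (D.simples_subset hα) |> D.actV_roots D.w0 α |>
      D.neg_mem_roots)] at hspan
    have := Submodule.add_mem _ hspan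
      (Submodule.smul_mem _ (D.pairR γ (D.cv (-D.actV D.w0 α))) hνN)
    rwa [sub_add_cancel] at this

lemma WM_deltaSimples_le_setStabilizer {PiM : Finset D.V} (hPiM : PiM ⊆ D.simples) :
    D.WM (D.deltaSimples PiM) ≤ D.setStabilizer (D.posRootsOutside (D.deltaSimples PiM)) := by
  refine Subgroup.closure_le _ |>.mpr ?_
  rintro _ ⟨ν, hν, rfl⟩
  obtain ⟨α, hαM, rfl⟩ := Finset.mem_image.mp hν
  exact D.s_mem_setStabilizer (D.neg_mem_roots (D.actV_roots _ _
    (D.posRoots_subset (D.simples_subset (hPiM hαM)))))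
    fun γ hγ => D.actV_s_mem_posRootsOutside hPiM hν hγ

lemma isMinRep_w0_mul {PiM : Finset D.V} {w0dM : D.W}
    (hw0dM : D.IsLongest (D.deltaSimples PiM) w0dM) :
    D.IsMinRep (D.deltaSimples PiM) (D.w0 * w0dM) := fun γ hγ => by
  rw [actV_mul_apply]
  exact D.actV_w0_mem_posRoots (D.actV_roots _ _ (D.posRoots_subset hγ.1))
    (D.not_mem_posRoots_of_neg_mem (hw0dM.2 γ hγ).1)

/-- The positive root `-x⁻¹β` would lie outside the span of `Π_{δ(M)}`, yet `w₀ w_{0,δ(M)} m`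
would send it to the positive root `β`. -/
lemma s_mul_ne_w0_mul {PiM : Finset D.V} (hPiM : PiM ⊆ D.simples) {w0dM : D.W}
    (hw0dM : D.IsLongest (D.deltaSimples PiM) w0dM) {x : D.W}
    (hx : D.IsMinRep (D.deltaSimples PiM) x) {β : D.V} (hβ : β ∈ D.posRoots)
    (hxβ : -D.actV x⁻¹ β ∈ D.posRoots) {m : D.W} (hm : m ∈ D.WM (D.deltaSimples PiM)) :
    D.s β * x ≠ D.w0 * w0dM * m := by
  intro h
  have hxγ : D.actV x (-D.actV x⁻¹ β) = -β := by simp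
  have hγN : -D.actV x⁻¹ β ∉ Submodule.span ℝ (D.deltaSimples PiM : Set D.V) :=
    fun hspan => D.posRoots_not_neg β hβ (hxγ ▸ hx _ ⟨hxβ, hspan⟩)
  have hout := (D.WM_deltaSimples_le_setStabilizer hPiM (mul_mem hw0dM.1 hm) _).mpr ⟨hxβ, hγN⟩
  have hβ' : D.actV D.w0 (D.actV (w0dM * m) (-D.actV x⁻¹ β)) = β := by
    have := congrArg (fun g => D.actV g (-D.actV x⁻¹ β)) h
    simp only [actV_mul_apply, hxγ] at this ⊢
    rw [← this, map_neg, D.actV_s_self (D.posRoots_subset hβ), neg_neg]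
  exact D.actV_w0_not_mem_posRoots hout.1 (by rw [hβ']; exact hβ)

namespace CosetData

variable {D} {P : Finset D.V} (cd : D.CosetData P)

lemma c_mul_eq {x m : D.W} (hx : D.IsMinRep P x) (hm : m ∈ D.WM P) : cd.c (x * m) = x :=
  (cd.uniq (x * m) x m hx hm rfl).1.symm

lemma m_mul_eq {x m : D.W} (hx : D.IsMinRep P x) (hm : m ∈ D.WM P) : cd.m (x * m) = m :=
  (cd.uniq (x * m) x m hx hm rfl).2.symm

lemma c_eq_self {x : D.W} (hx : D.IsMinRep P x) : cd.c x = x := by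
  simpa using cd.c_mul_eq hx (one_mem _)

lemma eq_c_of_c_mul_eq {z x j : D.W} (hx : D.IsMinRep P x) (h : cd.c (z * x) = j) :
    x = cd.c (z⁻¹ * j) := by
  have hzx : z⁻¹ * j = x * (cd.m (z * x))⁻¹ := by
    rw [← h, eq_mul_inv_iff_mul_eq, mul_assoc, ← cd.factor, inv_mul_cancel_left]
  rw [hzx, cd.c_mul_eq hx (inv_mem (cd.m_mem _))]

end CosetData

lemma θ_mem_HM (P : Finset D.V) (ω : D.VC) : D.θ ω ∈ D.HM P :=
  Algebra.subset_adjoin (Or.inl ⟨ω, rfl⟩)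

lemma t_mem_HM {P : Finset D.V} {w : D.W} (hw : w ∈ D.WM P) : D.t w ∈ D.HM P :=
  Algebra.subset_adjoin (Or.inr ⟨w, hw, rfl⟩)

def hmtSpan (P : Finset D.V) : Submodule ℂ D.H :=
  Submodule.span ℂ {h | ∃ a ∈ D.HM P, ∃ z, h = a * D.t z}

section HeckeSpan

variable {D} {P : Finset D.V}

lemma mul_mem_hmtSpan {a h : D.H} (ha : a ∈ D.HM P) (hh : h ∈ D.hmtSpan P) :
    a * h ∈ D.hmtSpan P := by
  refine (Submodule.map_span_le (LinearMap.mulLeft ℂ a) _ _).mpr ?_ (Submodule.mem_map_of_mem hh)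
  rintro _ ⟨b, hb, z, rfl⟩
  exact Submodule.subset_span ⟨a * b, mul_mem ha hb, z, (mul_assoc _ _ _).symm⟩

lemma mul_t_mem_hmtSpan {h : D.H} (hh : h ∈ D.hmtSpan P) (z : D.W) :
    h * D.t z ∈ D.hmtSpan P := by
  refine (Submodule.map_span_le (LinearMap.mulRight ℂ (D.t z)) _ _).mpr ?_
    (Submodule.mem_map_of_mem hh)
  rintro _ ⟨a, ha, z', rfl⟩
  exact Submodule.subset_span ⟨a, ha, z' * z, by simp [mul_assoc, D.t_mul]⟩

lemma t_mem_hmtSpan (z : D.W) : D.t z ∈ D.hmtSpan P :=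
  Submodule.subset_span ⟨1, one_mem _, z, (one_mul _).symm⟩

lemma t_s_mul_θ {α : D.V} (hα : α ∈ D.simples) (ω : D.VC) :
    D.t (D.s α) * D.θ ω = D.θ (D.actVC (D.s α) ω) * D.t (D.s α)
      - algebraMap ℂ D.H ((D.kpar α : ℂ) * D.pairC (D.actVC (D.s α) ω) (D.iVd (D.cv α))) := by
  have hss : D.actVC (D.s α) (D.actVC (D.s α) ω) = ω := by
    rw [← actVC_mul_apply, D.s_mul_self (D.posRoots_subset (D.simples_subset hα)), map_one]
    rfl
  rw [D.cross_rel α hα, hss, add_sub_cancel_right]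

lemma t_mul_θ_mem_hmtSpan (z : D.W) (ω : D.VC) : D.t z * D.θ ω ∈ D.hmtSpan P := by
  have hz : z ∈ Subgroup.closure (D.s '' D.simples) := D.closure_s_simples ▸ Subgroup.mem_top z
  induction hz using Subgroup.closure_induction_right generalizing ω with
  | one =>
    rw [D.t_one, one_mul]
    exact Submodule.subset_span ⟨D.θ ω, D.θ_mem_HM P ω, 1, by rw [D.t_one, mul_one]⟩
  | mul_right z _ _ hs ih =>
    obtain ⟨α, hα, rfl⟩ := hs
    rw [← D.t_mul, mul_assoc, D.t_s_mul_θ hα, mul_sub, ← mul_assoc, ← Algebra.commutes,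
      ← Algebra.smul_def]
    exact sub_mem (mul_t_mem_hmtSpan (ih _) _) (Submodule.smul_mem _ _ (t_mem_hmtSpan z))
  | mul_inv_cancel z _ _ hs ih =>
    obtain ⟨α, hα, rfl⟩ := hs
    rw [D.s_inv (D.posRoots_subset (D.simples_subset hα)), ← D.t_mul, mul_assoc,
      D.t_s_mul_θ hα, mul_sub, ← mul_assoc, ← Algebra.commutes, ← Algebra.smul_def]
    exact sub_mem (mul_t_mem_hmtSpan (ih _) _) (Submodule.smul_mem _ _ (t_mem_hmtSpan z))

lemma mul_mem_hmtSpan_of_mem_adjoin {c : D.H} (hc : c ∈ Algebra.adjoin ℂ (Set.range D.θ)) :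
    ∀ h ∈ D.hmtSpan P, h * c ∈ D.hmtSpan P := by
  induction hc using Algebra.adjoin_induction with
  | mem _ hx =>
    obtain ⟨ω, rfl⟩ := hx
    intro h hh
    refine (Submodule.map_span_le (LinearMap.mulRight ℂ (D.θ ω)) _ _).mpr ?_
      (Submodule.mem_map_of_mem hh)
    rintro _ ⟨a, ha, z, rfl⟩
    simpa [mul_assoc] using mul_mem_hmtSpan ha (t_mul_θ_mem_hmtSpan z ω)
  | algebraMap r =>
    intro h hh
    rw [← Algebra.commutes, ← Algebra.smul_def]
    exact Submodule.smul_mem _ _ hh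
  | add _ _ _ _ ihx ihy => exact fun h hh => by rw [mul_add]; exact add_mem (ihx h hh) (ihy h hh)
  | mul _ _ _ _ ihx ihy => exact fun h hh => by rw [← mul_assoc]; exact ihy _ (ihx h hh)

lemma hmtSpan_eq_top : D.hmtSpan P = ⊤ := by
  refine Submodule.eq_top_iff'.mpr fun h => ?_
  obtain ⟨c, rfl⟩ := D.pbw_span h
  exact Submodule.sum_mem _ fun w _ =>
    mul_mem_hmtSpan_of_mem_adjoin (c w).2 _ (t_mem_hmtSpan w)

end HeckeSpan

section InducedModule

variable {D} {P : Finset D.V}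

lemma tM_congr {w w' : D.W} (h : w = w') (hw : w ∈ D.WM P) (hw' : w' ∈ D.WM P) :
    D.tM P w hw = D.tM P w' hw' := by
  subst h
  rfl

lemma intertwine_of_mem_HM {M U : Type} [AddCommGroup M] [Module ℂ M] [AddCommGroup U]
    [Module ℂ U] {ρ : D.H →ₐ[ℂ] Module.End ℂ M} {σ : D.HM P →ₐ[ℂ] Module.End ℂ U}
    (e : M →ₗ[ℂ] U) (hθ : ∀ ω y, e (ρ (D.θ ω) y) = σ (D.θM P ω) (e y))
    (ht : ∀ g (hg : g ∈ D.WM P) y, e (ρ (D.t g) y) = σ (D.tM P g hg) (e y))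
    {h : D.H} (hh : h ∈ D.HM P) (y : M) : e (ρ h y) = σ ⟨h, hh⟩ (e y) := by
  induction hh using Algebra.adjoin_induction generalizing y with
  | mem _ hgen =>
    rcases hgen with ⟨ω, rfl⟩ | ⟨g, hg, rfl⟩
    exacts [hθ ω y, ht g hg y]
  | algebraMap r =>
    change _ = σ (algebraMap ℂ (D.HM P) r) _
    simp
  | add u v hu hv ihu ihv =>
    change _ = σ (⟨u, hu⟩ + ⟨v, hv⟩) _
    simp [ihu, ihv]
  | mul u v hu hv ihu ihv =>
    change _ = σ (⟨u, hu⟩ * ⟨v, hv⟩) _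
    rw [map_mul, Module.End.mul_apply, ihu, ihv, map_mul, Module.End.mul_apply]

namespace IsInducedAction

variable {cd : D.CosetData P} {U : Type} [AddCommGroup U] [Module ℂ U]
  {σ : D.HM P →ₐ[ℂ] Module.End ℂ U} {πI : D.H →ₐ[ℂ] Module.End ℂ (D.JM P → U)}

lemma t_apply_of_c_eq (hπI : D.IsInducedAction P cd σ πI) (z : D.W) (y : D.JM P → U)
    {x j : D.JM P} (hxj : cd.c (z * x.1) = j.1) :
    πI (D.t z) y j = σ (D.tM P (cd.m (z * x.1)) (cd.m_mem _)) (y x) := by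
  classical
  conv_lhs => rw [← Finset.univ_sum_single y]
  rw [map_sum, Finset.sum_apply, Finset.sum_eq_single x]
  · rw [hπI.1, Pi.single_apply, if_pos (Subtype.ext hxj.symm)]
  · intro x' _ hx'
    rw [hπI.1, Pi.single_apply, if_neg]
    refine fun h => hx' (Subtype.ext ?_)
    rw [cd.eq_c_of_c_mul_eq x'.2 (congrArg Subtype.val h).symm, ← cd.eq_c_of_c_mul_eq x.2 hxj]
  · simp

lemma θ_apply_of_forall_ne (hπI : D.IsInducedAction P cd σ πI) {j : D.JM P}
    (hj : ∀ (x : D.JM P) (β : D.V), β ∈ D.posRoots → -D.actV x.1⁻¹ β ∈ D.posRoots →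
      cd.c (D.s β * x.1) ≠ j.1)
    (ω : D.VC) (y : D.JM P → U) :
    πI (D.θ ω) y j = σ (D.θM P (D.actVC j.1⁻¹ ω)) (y j) := by
  classical
  have hterm : ∀ x, πI (D.θ ω) (Pi.single x (y x)) j =
      (Pi.single x (σ (D.θM P (D.actVC x.1⁻¹ ω)) (y x)) : D.JM P → U) j := by
    intro x
    rw [hπI.2, Pi.add_apply, Finset.sum_apply, Finset.sum_eq_zero, add_zero]
    intro β hβ
    obtain ⟨hβ, hxβ⟩ := Finset.mem_filter.mp hβ
    rw [Pi.smul_apply, Pi.single_eq_of_ne, smul_zero]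
    exact fun h => hj x β hβ hxβ (congrArg Subtype.val h).symm
  conv_lhs => rw [← Finset.univ_sum_single y]
  rw [map_sum, Finset.sum_apply]
  simp only [hterm]
  rw [← Finset.sum_apply, Finset.univ_sum_single]

end IsInducedAction

end InducedModule

section Frobenius

variable {D} {P : Finset D.V} {X U J : Type} [AddCommGroup X] [Module ℂ X]
  [AddCommGroup U] [Module ℂ U]

/-- The hypotheses make `J → U` behave as the module coinduced from `σ`, with `e` as evaluation at
the identity. -/
lemma nonempty_homHM_equiv_homH (π : D.H →ₐ[ℂ] Module.End ℂ X)
    (σ : D.HM P →ₐ[ℂ] Module.End ℂ U) (ρ : D.H →ₐ[ℂ] Module.End ℂ (J → U))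
    (e : (J → U) →ₗ[ℂ] U) (g : J → D.H)
    (hspan : ∀ h, h ∈ Submodule.span ℂ {h | ∃ a ∈ D.HM P, ∃ j, h = a * g j})
    (hev : ∀ (a : D.H) (ha : a ∈ D.HM P) (y : J → U), e (ρ a y) = σ ⟨a, ha⟩ (e y))
    (hback : ∀ j (y : J → U), e (ρ (g j) y) = y j) :
    Nonempty (HomHM D P π σ ≃ₗ[ℂ] HomH D π ρ) := by
  let Ψ : (X →ₗ[ℂ] U) → X →ₗ[ℂ] J → U := fun f => LinearMap.pi fun j => f ∘ₗ π (g j)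
  have hΨe : ∀ f ∈ HomHM D P π σ, ∀ h x, f (π h x) = e (ρ h (Ψ f x)) := by
    intro f hf h x
    induction hspan h using Submodule.span_induction generalizing x with
    | mem _ hh =>
      obtain ⟨a, ha, j, rfl⟩ := hh
      rw [map_mul, Module.End.mul_apply, hf a ha, map_mul, Module.End.mul_apply, hev a ha,
        hback]
      rfl
    | zero => simp
    | add _ _ _ _ ihx ihy => simp [ihx, ihy]
    | smul c _ _ ih => simp [ih]
  have hΨ : ∀ f ∈ HomHM D P π σ, Ψ f ∈ HomH D π ρ := fun f hf h x => funext fun j => by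
    calc f (π (g j) (π h x)) = f (π (g j * h) x) := by rw [map_mul]; rfl
      _ = e (ρ (g j * h) (Ψ f x)) := hΨe f hf _ x
      _ = ρ h (Ψ f x) j := by rw [map_mul, Module.End.mul_apply, hback]
  have hΦ : ∀ F ∈ HomH D π ρ, e ∘ₗ F ∈ HomHM D P π σ := fun F hF h hh x => by
    simp [hF h x, hev h hh]
  refine ⟨LinearEquiv.ofLinearMap
    { toFun := fun f => ⟨Ψ f, hΨ f f.2⟩
      map_add' := fun _ _ => rfl
      map_smul' := fun _ _ => rfl }
    { toFun := fun F => ⟨e ∘ₗ F, hΦ F F.2⟩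
      map_add' := fun _ _ => Subtype.ext (LinearMap.ext fun _ => map_add e _ _)
      map_smul' := fun _ _ => Subtype.ext (LinearMap.ext fun _ => map_smul e _ _) } ?_ ?_⟩
  · refine LinearMap.ext fun F => Subtype.ext (LinearMap.ext fun x => funext fun j => ?_)
    change e (F.1 (π (g j) x)) = F.1 x j
    rw [F.2, hback]
  · refine LinearMap.ext fun f => Subtype.ext (LinearMap.ext fun x => ?_)
    change e (Ψ f.1 x) = f.1 x
    simpa using (hΨe f f.2 1 x).symm

end Frobenius

section LongestCoset

variable {D} {PiM : Finset D.V} {w0dM : D.W}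

def w0Rep (hw0dM : D.IsLongest (D.deltaSimples PiM) w0dM) : D.JM (D.deltaSimples PiM) :=
  ⟨D.w0 * w0dM, D.isMinRep_w0_mul hw0dM⟩

variable {cdD : D.CosetData (D.deltaSimples PiM)} {U' : Type} [AddCommGroup U'] [Module ℂ U']
  {σ' : D.HM PiM →ₐ[ℂ] Module.End ℂ U'} {aσ : D.HM (D.deltaSimples PiM) →ₐ[ℂ] Module.End ℂ U'}
  {πI' : D.H →ₐ[ℂ] Module.End ℂ (D.JM (D.deltaSimples PiM) → U')}

lemma inducedAction_t_w0Rep_mul_inv_apply (hw0dM : D.IsLongest (D.deltaSimples PiM) w0dM)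
    (hπI' : D.IsInducedAction (D.deltaSimples PiM) cdD aσ πI')
    (j : D.JM (D.deltaSimples PiM)) (y : D.JM (D.deltaSimples PiM) → U') :
    πI' (D.t ((w0Rep hw0dM).1 * j.1⁻¹)) y (w0Rep hw0dM) = y j := by
  have hm : cdD.m ((w0Rep hw0dM).1 * j.1⁻¹ * j.1) = 1 := by
    simpa using cdD.m_mul_eq (w0Rep hw0dM).2 (one_mem _)
  rw [hπI'.t_apply_of_c_eq _ y (by rw [inv_mul_cancel_right, cdD.c_eq_self (w0Rep hw0dM).2]),
    tM_congr hm _ (one_mem _), show D.tM _ 1 (one_mem _) = 1 from Subtype.ext D.t_one, map_one]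
  rfl

lemma inducedAction_θ_apply_w0Rep (hPiM : PiM ⊆ D.simples)
    (hw0dM : D.IsLongest (D.deltaSimples PiM) w0dM)
    (haσθ : ∀ ω : D.VC,
      aσ (D.θM (D.deltaSimples PiM) ω) = σ' (D.θM PiM (D.actVC (D.w0 * w0dM) ω)))
    (hπI' : D.IsInducedAction (D.deltaSimples PiM) cdD aσ πI')
    (ω : D.VC) (y : D.JM (D.deltaSimples PiM) → U') :
    πI' (D.θ ω) y (w0Rep hw0dM) = σ' (D.θM PiM ω) (y (w0Rep hw0dM)) := by
  refine (hπI'.θ_apply_of_forall_ne (fun x β hβ hxβ hc => ?_) ω y).trans ?_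
  · refine D.s_mul_ne_w0_mul hPiM hw0dM x.2 hβ hxβ (cdD.m_mem (D.s β * x.1)) ?_
    conv_lhs => rw [cdD.factor (D.s β * x.1), hc]
    rfl
  · rw [haσθ]
    simp only [w0Rep, actVC_apply_inv_apply]

lemma inducedAction_t_apply_w0Rep (hPiM : PiM ⊆ D.simples)
    (hw0dM : D.IsLongest (D.deltaSimples PiM) w0dM)
    (haσt : ∀ (m' : D.W) (hm' : m' ∈ D.WM (D.deltaSimples PiM))
      (hm'' : (D.w0 * w0dM) * m' * (D.w0 * w0dM)⁻¹ ∈ D.WM PiM),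
      aσ (D.tM (D.deltaSimples PiM) m' hm') = σ' (D.tM PiM _ hm''))
    (hπI' : D.IsInducedAction (D.deltaSimples PiM) cdD aσ πI')
    {g : D.W} (hg : g ∈ D.WM PiM) (y : D.JM (D.deltaSimples PiM) → U') :
    πI' (D.t g) y (w0Rep hw0dM) = σ' (D.tM PiM g hg) (y (w0Rep hw0dM)) := by
  set x0 := (w0Rep hw0dM).1 with hx0
  have hg' : x0 * (x0⁻¹ * g * x0) * x0⁻¹ = g := by group
  have hn : x0⁻¹ * g * x0 ∈ D.WM (D.deltaSimples PiM) :=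
    (D.conj_mem_WM_iff hPiM hw0dM.1).mp (hg'.symm ▸ hg)
  have hgx0 : g * x0 = x0 * (x0⁻¹ * g * x0) := by group
  rw [hπI'.t_apply_of_c_eq _ y (x := w0Rep hw0dM)
      (by rw [← hx0, hgx0, cdD.c_mul_eq (w0Rep hw0dM).2 hn]),
    tM_congr (by rw [← hx0, hgx0, cdD.m_mul_eq (w0Rep hw0dM).2 hn]) _ hn,
    haσt _ hn (hg'.symm ▸ hg)]
  exact congrArg (fun a => σ' a (y (w0Rep hw0dM))) (Subtype.ext (congrArg D.t hg'))

/-- Every `z ∈ W` factors as `(x₀ m⁻¹ x₀⁻¹) (x₀ j⁻¹)` with `x₀ = w₀ w_{0,δ(M)}`,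
`m ∈ W_{δ(M)}` and `j ∈ J_{δ(M)}`, and conjugation by `x₀` carries `W_{δ(M)}` onto `W_M`. -/
lemma mem_span_HM_mul_t_w0Rep (hPiM : PiM ⊆ D.simples)
    (hw0dM : D.IsLongest (D.deltaSimples PiM) w0dM) (cdD : D.CosetData (D.deltaSimples PiM))
    (h : D.H) :
    h ∈ Submodule.span ℂ {h | ∃ a ∈ D.HM PiM, ∃ j : D.JM (D.deltaSimples PiM),
      h = a * D.t ((w0Rep hw0dM).1 * j.1⁻¹)} := by
  refine Submodule.span_le.mpr ?_ (hmtSpan_eq_top (P := PiM) ▸ Submodule.mem_top (x := h))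
  rintro _ ⟨a, ha, z, rfl⟩
  set x0 := (w0Rep hw0dM).1
  set c := cdD.c (z⁻¹ * x0)
  set m := cdD.m (z⁻¹ * x0)
  have hz : z = x0 * m⁻¹ * x0⁻¹ * (x0 * c⁻¹) := calc
    z = x0 * (z⁻¹ * x0)⁻¹ := by group
    _ = x0 * (c * m)⁻¹ := by rw [← cdD.factor]
    _ = x0 * m⁻¹ * x0⁻¹ * (x0 * c⁻¹) := by group
  have ha' : x0 * m⁻¹ * x0⁻¹ ∈ D.WM PiM :=
    (D.conj_mem_WM_iff hPiM hw0dM.1).mpr (inv_mem (cdD.m_mem _))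
  refine Submodule.subset_span ⟨a * D.t (x0 * m⁻¹ * x0⁻¹), mul_mem ha (D.t_mem_HM ha'),
    ⟨c, cdD.c_min _⟩, ?_⟩
  rw [mul_assoc, D.t_mul]
  exact congrArg (fun w => a * D.t w) hz

end LongestCoset

end GHA

open GHA in
theorem stmt_8_general (D : GHA) (PiM : Finset D.V)
    (hPiM : PiM ⊆ D.simples)
    (w0dM : D.W) (hw0dM : D.IsLongest (D.deltaSimples PiM) w0dM)
    (cdD : GHA.CosetData D (D.deltaSimples PiM))
    {X : Type} [AddCommGroup X] [Module ℂ X]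
    (π : D.H →ₐ[ℂ] Module.End ℂ X)
    {U' : Type} [AddCommGroup U'] [Module ℂ U']
    (σ' : D.HM PiM →ₐ[ℂ] Module.End ℂ U')
    (aσ : D.HM (D.deltaSimples PiM) →ₐ[ℂ] Module.End ℂ U')
    (haσt : ∀ (m' : D.W) (hm' : m' ∈ D.WM (D.deltaSimples PiM))
      (hm'' : (D.w0 * w0dM) * m' * (D.w0 * w0dM)⁻¹ ∈ D.WM PiM),
      aσ (D.tM (D.deltaSimples PiM) m' hm') = σ' (D.tM PiM _ hm''))
    (haσθ : ∀ ω : D.VC,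
      aσ (D.θM (D.deltaSimples PiM) ω) =
        σ' (D.θM PiM (D.actVC (D.w0 * w0dM) ω)))
    (πI' : D.H →ₐ[ℂ] Module.End ℂ (D.JM (D.deltaSimples PiM) → U'))
    (hπI' : GHA.IsInducedAction D (D.deltaSimples PiM) cdD aσ πI') :
    Nonempty ((HomHM D PiM π σ') ≃ₗ[ℂ] (HomH D π πI')) :=
  nonempty_homHM_equiv_homH π σ' πI' (LinearMap.proj (w0Rep hw0dM))
    (fun j => D.t ((w0Rep hw0dM).1 * j.1⁻¹))
    (mem_span_HM_mul_t_w0Rep hPiM hw0dM cdD)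
    (fun _ ha => intertwine_of_mem_HM (ρ := πI') (σ := σ') (LinearMap.proj (w0Rep hw0dM))
      (inducedAction_θ_apply_w0Rep hPiM hw0dM haσθ hπI')
      (fun _ hg => inducedAction_t_apply_w0Rep hPiM hw0dM haσt hπI' hg) ha)
    (inducedAction_t_w0Rep_mul_inv_apply hw0dM hπI')

open GHA in
/-- second form of Frobenius reciprocity:
Hom_{H_M}(X|_{H_M}, U′) ≅ Hom_H(X, X(δ(M), aσ′)). -/
theorem stmt_8 (D : GHA) (hk : D.KSymm) (PiM : Finset D.V)
    (hPiM : PiM ⊆ D.simples)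
    (w0dM : D.W) (hw0dM : D.IsLongest (D.deltaSimples PiM) w0dM)
    (cdD : GHA.CosetData D (D.deltaSimples PiM))
    {X : Type} [AddCommGroup X] [Module ℂ X] [FiniteDimensional ℂ X]
    (π : D.H →ₐ[ℂ] Module.End ℂ X)
    {U' : Type} [AddCommGroup U'] [Module ℂ U'] [FiniteDimensional ℂ U']
    (σ' : D.HM PiM →ₐ[ℂ] Module.End ℂ U')
    (aσ : D.HM (D.deltaSimples PiM) →ₐ[ℂ] Module.End ℂ U')
    (haσt : ∀ (m' : D.W) (hm' : m' ∈ D.WM (D.deltaSimples PiM))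
      (hm'' : (D.w0 * w0dM) * m' * (D.w0 * w0dM)⁻¹ ∈ D.WM PiM),
      aσ (D.tM (D.deltaSimples PiM) m' hm') = σ' (D.tM PiM _ hm''))
    (haσθ : ∀ ω : D.VC,
      aσ (D.θM (D.deltaSimples PiM) ω) =
        σ' (D.θM PiM (D.actVC (D.w0 * w0dM) ω)))
    (πI' : D.H →ₐ[ℂ] Module.End ℂ (D.JM (D.deltaSimples PiM) → U'))
    (hπI' : GHA.IsInducedAction D (D.deltaSimples PiM) cdD aσ πI') :
    Nonempty ((HomHM D PiM π σ') ≃ₗ[ℂ] (HomH D π πI')) :=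
  stmt_8_general D PiM hPiM w0dM hw0dM cdD π σ' aσ haσt haσθ πI' hπI'
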